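/- (Symmetrizer recursion, the symmetric analogue of the antisymmetrizer recursion.) For every integer k ≥ 1 the q-symmetrizers satisfy q^{−k} S^{(k)} = (k+1)_q S^{(k+1)} − k_q S^{(k)} R̂_k S^{(k)}, as operators on V^{⊗(k+1)} (with S^{(k)} acting in the first k factors). -/

import Mathlib

open Finset

/-- Operators on `V^{⊗ m}` where `V = F^N`, represented as matrices indexed by
multi-indices `Fin m → Fin N`. -/
abbrev TensM (R : Type*) (N m : ℕ) := Matrix (Fin m → Fin N) (Fin m → Fin N) R

/-- Operators on `V ⊗ V`, i.e. `N² × N²` matrices. -/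
abbrev RMat (R : Type*) (N : ℕ) := Matrix (Fin N × Fin N) (Fin N × Fin N) R

/-- The `q`-number `k_q = (q^k - q^{-k})/(q - q^{-1})`. -/
noncomputable def qnum {F : Type*} [Field F] (q : F) (k : ℕ) : F :=
  (q ^ k - q⁻¹ ^ k) / (q - q⁻¹)

/-- Place an `N × N` matrix on the tensor leg number `i` (0-based) of `V^{⊗ m}`,
acting as the identity on all other legs. -/
def place1 {R : Type*} [Zero R] {N m : ℕ} (i : ℕ) (M : Matrix (Fin N) (Fin N) R) :
    TensM R N m :=
  Matrix.of fun a b =>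
    if h : i < m then
      if ∀ t : Fin m, t.val ≠ i → a t = b t then M (a ⟨i, h⟩) (b ⟨i, h⟩) else 0
    else 0

/-- Place an operator on `V ⊗ V` on the (0-based) tensor legs `i, i+1` of `V^{⊗ m}`,
acting as the identity on all other legs.  (So the paper's `R̂_i`, `1`-based, is
`place2 (i-1)`.) -/
def place2 {R : Type*} [Zero R] {N m : ℕ} (i : ℕ) (M : RMat R N) :
    TensM R N m :=
  Matrix.of fun a b =>
    if h : i + 1 < m then
      if ∀ t : Fin m, t.val ≠ i → t.val ≠ i + 1 → a t = b t then
        M (a ⟨i, by omega⟩, a ⟨i + 1, h⟩) (b ⟨i, by omega⟩, b ⟨i + 1, h⟩)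
      else 0
    else 0

/-- Embed an operator on `V^{⊗ k}` into `V^{⊗ m}` (`k ≤ m`), acting on the first `k`
tensor legs and as the identity on the remaining legs. -/
def embed {R : Type*} [Zero R] {N : ℕ} (m : ℕ) {k : ℕ} (M : TensM R N k) :
    TensM R N m :=
  Matrix.of fun a b =>
    if h : k ≤ m then
      if ∀ t : Fin m, k ≤ t.val → a t = b t then
        M (fun s => a ⟨s.val, lt_of_lt_of_le s.isLt h⟩)
          (fun s => b ⟨s.val, lt_of_lt_of_le s.isLt h⟩)
      else 0
    else 0

/-- The braid form of the Yang--Baxter equation `R̂₁ R̂₂ R̂₁ = R̂₂ R̂₁ R̂₂` on `V^{⊗3}`. -/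
def YangBaxter {F : Type*} [Field F] {N : ℕ} (Rh : RMat F N) : Prop :=
  (place2 0 Rh : TensM F N 3) * place2 1 Rh * place2 0 Rh =
    place2 1 Rh * place2 0 Rh * place2 1 Rh

/-- The Hecke condition `R̂² = I + (q - q⁻¹) R̂`. -/
def Hecke {F : Type*} [Field F] {N : ℕ} (q : F) (Rh : RMat F N) : Prop :=
  Rh * Rh = 1 + (q - q⁻¹) • Rh

/-- The `q`-antisymmetrizers `A^{(k)}`, defined inductively by `A^{(1)} = I` and
`A^{(k)} = (1/k_q) A^{(k-1)} (q^{k-1} - (k-1)_q R̂_{k-1}) A^{(k-1)}`. -/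
noncomputable def antis {F : Type*} [Field F] {N : ℕ} (Rh : RMat F N) (q : F) :
    (k : ℕ) → TensM F N k
  | 0 => 1
  | 1 => 1
  | k + 2 =>
      (qnum q (k + 2))⁻¹ •
        (embed (k + 2) (antis Rh q (k + 1)) *
          (q ^ (k + 1) • (1 : TensM F N (k + 2)) - qnum q (k + 1) • place2 k Rh) *
          embed (k + 2) (antis Rh q (k + 1)))

/-- The `q`-symmetrizers `S^{(k)}`, defined inductively by `S^{(1)} = I` and
`S^{(k)} = (1/k_q) S^{(k-1)} (q^{1-k} + (k-1)_q R̂_{k-1}) S^{(k-1)}`. -/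
noncomputable def syms {F : Type*} [Field F] {N : ℕ} (Rh : RMat F N) (q : F) :
    (k : ℕ) → TensM F N k
  | 0 => 1
  | 1 => 1
  | k + 2 =>
      (qnum q (k + 2))⁻¹ •
        (embed (k + 2) (syms Rh q (k + 1)) *
          (q⁻¹ ^ (k + 1) • (1 : TensM F N (k + 2)) + qnum q (k + 1) • place2 k Rh) *
          embed (k + 2) (syms Rh q (k + 1)))

/-- Partial trace over all tensor legs except the last one. -/
def trAllButLast {R : Type*} [AddCommMonoid R] {N : ℕ} :
    {m : ℕ} → TensM R N m → Matrix (Fin N) (Fin N) R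
  | 0, _ => 0
  | m + 1, M => Matrix.of fun x y => ∑ a : Fin m → Fin N, M (Fin.snoc a x) (Fin.snoc a y)

/-- Partial trace over all tensor legs except the first one. -/
def trAllButFirst {R : Type*} [AddCommMonoid R] {N : ℕ} :
    {m : ℕ} → TensM R N m → Matrix (Fin N) (Fin N) R
  | 0, _ => 0
  | m + 1, M => Matrix.of fun x y => ∑ a : Fin m → Fin N, M (Fin.cons x a) (Fin.cons y a)

/-- Extension of scalars `F → 𝒜` applied entrywise (scalar entries are central in `𝒜`). -/
def lift {F : Type*} [Field F] (𝒜 : Type*) [Ring 𝒜] [Algebra F 𝒜] {N m : ℕ}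
    (M : TensM F N m) : TensM 𝒜 N m := M.map (algebraMap F 𝒜)

/-- The product `R̂_{i+1} R̂_{i+2} ⋯ R̂_{i+l}` (1-based paper numbering), i.e. the product of
copies of `R̂` placed at 0-based positions `i, i+1, …, i+l-1` of `V^{⊗ m}`. -/
noncomputable def rChainFrom {F : Type*} [Field F] {N : ℕ} (m : ℕ) (Rh : RMat F N)
    (i : ℕ) : ℕ → TensM F N m
  | 0 => 1
  | l + 1 => rChainFrom m Rh i l * place2 (i + l) Rh

/-- The product `R̂₁ R̂₂ ⋯ R̂_l` (1-based paper numbering) on `V^{⊗ m}`. -/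
noncomputable def rChain {F : Type*} [Field F] {N : ℕ} (m : ℕ) (Rh : RMat F N)
    (l : ℕ) : TensM F N m := rChainFrom m Rh 0 l

/-- The product `T₁ T₂ ⋯ T_k` of copies of the quantum matrix `T` on `V^{⊗ m}`. -/
def Tprod {𝒜 : Type*} [Ring 𝒜] {N : ℕ} (m : ℕ) (T : Matrix (Fin N) (Fin N) 𝒜) :
    ℕ → TensM 𝒜 N m
  | 0 => 1
  | k + 1 => Tprod m T k * place1 k T

/-- The matrix `T₁T₂` on `V ⊗ V`, `(T₁T₂)^{ij}_{kl} = T^i_k T^j_l`. -/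
def TT {𝒜 : Type*} [Mul 𝒜] {N : ℕ} (T : Matrix (Fin N) (Fin N) 𝒜) : RMat 𝒜 N :=
  Matrix.of fun p r => T p.1 r.1 * T p.2 r.2

/-- The RTT relation `R̂ T₁T₂ = T₁T₂ R̂` (entries of `R̂` are central scalars). -/
def RTTrel {F : Type*} [Field F] {N : ℕ} (𝒜 : Type*) [Ring 𝒜] [Algebra F 𝒜]
    (Rh : RMat F N) (T : Matrix (Fin N) (Fin N) 𝒜) : Prop :=
  Rh.map (algebraMap F 𝒜) * TT T = TT T * Rh.map (algebraMap F 𝒜)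

/-- The `k`-th underlined power `T^{⟨k⟩} = Tr_{(1…k-1)} (R̂₁ ⋯ R̂_{k-1} T₁ ⋯ T_k)`. -/
noncomputable def underPow {F : Type*} [Field F] (𝒜 : Type*) [Ring 𝒜] [Algebra F 𝒜]
    {N : ℕ} (Rh : RMat F N) (T : Matrix (Fin N) (Fin N) 𝒜) :
    ℕ → Matrix (Fin N) (Fin N) 𝒜
  | 0 => 1
  | k + 1 => trAllButLast (lift 𝒜 (rChain (k + 1) Rh k) * Tprod (k + 1) T (k + 1))

/-- The `k`-th overlined power `T^{[k]} = Tr_{(2…k)} (R̂₁ ⋯ R̂_{k-1} T₁ ⋯ T_k)`. -/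
noncomputable def overPow {F : Type*} [Field F] (𝒜 : Type*) [Ring 𝒜] [Algebra F 𝒜]
    {N : ℕ} (Rh : RMat F N) (T : Matrix (Fin N) (Fin N) 𝒜) :
    ℕ → Matrix (Fin N) (Fin N) 𝒜
  | 0 => 1
  | k + 1 => trAllButFirst (lift 𝒜 (rChain (k + 1) Rh k) * Tprod (k + 1) T (k + 1))

/-- The `k`-th right wedge power `T^{∧k,r} = Tr_{(1…k-1)} (A^{(k)} T₁ ⋯ T_k)`. -/
noncomputable def wedgeR {F : Type*} [Field F] (𝒜 : Type*) [Ring 𝒜] [Algebra F 𝒜]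
    {N : ℕ} (Rh : RMat F N) (q : F) (T : Matrix (Fin N) (Fin N) 𝒜) :
    ℕ → Matrix (Fin N) (Fin N) 𝒜
  | 0 => 1
  | k + 1 => trAllButLast (lift 𝒜 (antis Rh q (k + 1)) * Tprod (k + 1) T (k + 1))

/-- The `k`-th left wedge power `T^{∧k,l} = Tr_{(2…k)} (A^{(k)} T₁ ⋯ T_k)`. -/
noncomputable def wedgeL {F : Type*} [Field F] (𝒜 : Type*) [Ring 𝒜] [Algebra F 𝒜]
    {N : ℕ} (Rh : RMat F N) (q : F) (T : Matrix (Fin N) (Fin N) 𝒜) :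
    ℕ → Matrix (Fin N) (Fin N) 𝒜
  | 0 => 1
  | k + 1 => trAllButFirst (lift 𝒜 (antis Rh q (k + 1)) * Tprod (k + 1) T (k + 1))

/-- The `k`-th right symmetric power `T^{Sk,r} = Tr_{(1…k-1)} (S^{(k)} T₁ ⋯ T_k)`. -/
noncomputable def sPowR {F : Type*} [Field F] (𝒜 : Type*) [Ring 𝒜] [Algebra F 𝒜]
    {N : ℕ} (Rh : RMat F N) (q : F) (T : Matrix (Fin N) (Fin N) 𝒜) :
    ℕ → Matrix (Fin N) (Fin N) 𝒜
  | 0 => 1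
  | k + 1 => trAllButLast (lift 𝒜 (syms Rh q (k + 1)) * Tprod (k + 1) T (k + 1))

/-- The `k`-th left symmetric power `T^{Sk,l} = Tr_{(2…k)} (S^{(k)} T₁ ⋯ T_k)`. -/
noncomputable def sPowL {F : Type*} [Field F] (𝒜 : Type*) [Ring 𝒜] [Algebra F 𝒜]
    {N : ℕ} (Rh : RMat F N) (q : F) (T : Matrix (Fin N) (Fin N) 𝒜) :
    ℕ → Matrix (Fin N) (Fin N) 𝒜
  | 0 => 1
  | k + 1 => trAllButFirst (lift 𝒜 (syms Rh q (k + 1)) * Tprod (k + 1) T (k + 1))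

/-- The elementary symmetric functions `σ_k(T) = q^k Tr_{(1…k)} (A^{(k)} T₁ ⋯ T_k)`
(with `σ₀(T) = 1`). -/
noncomputable def sigmaT {F : Type*} [Field F] (𝒜 : Type*) [Ring 𝒜] [Algebra F 𝒜]
    {N : ℕ} (Rh : RMat F N) (q : F) (T : Matrix (Fin N) (Fin N) 𝒜) (k : ℕ) : 𝒜 :=
  q ^ k • Matrix.trace (lift 𝒜 (antis Rh q k) * Tprod k T k)

/-- The complete symmetric functions `τ_k(T) = q^{-k} Tr_{(1…k)} (S^{(k)} T₁ ⋯ T_k)`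
(with `τ₀(T) = 1`). -/
noncomputable def tauT {F : Type*} [Field F] (𝒜 : Type*) [Ring 𝒜] [Algebra F 𝒜]
    {N : ℕ} (Rh : RMat F N) (q : F) (T : Matrix (Fin N) (Fin N) 𝒜) (k : ℕ) : 𝒜 :=
  q⁻¹ ^ k • Matrix.trace (lift 𝒜 (syms Rh q k) * Tprod k T k)

/-- The `q`-power sums `s_k(T) = Tr_{(1…k)} (R̂₁ ⋯ R̂_{k-1} T₁ ⋯ T_k)` (with `s₀(T) = 1`). -/
noncomputable def psum {F : Type*} [Field F] (𝒜 : Type*) [Ring 𝒜] [Algebra F 𝒜]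
    {N : ℕ} (Rh : RMat F N) (T : Matrix (Fin N) (Fin N) 𝒜) (k : ℕ) : 𝒜 :=
  Matrix.trace (lift 𝒜 (rChain k Rh (k - 1)) * Tprod k T k)

/-- `D_ℓ = (n_q / q^n) Tr_{(1…n-1)} A^{(n)}`. -/
noncomputable def Dleft {F : Type*} [Field F] {N : ℕ} (Rh : RMat F N) (q : F) (n : ℕ) :
    Matrix (Fin N) (Fin N) F :=
  (qnum q n / q ^ n) • trAllButLast (antis Rh q n)

/-- `D_r = (n_q / q^n) Tr_{(2…n)} A^{(n)}`. -/
noncomputable def Dright {F : Type*} [Field F] {N : ℕ} (Rh : RMat F N) (q : F) (n : ℕ) :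
    Matrix (Fin N) (Fin N) F :=
  (qnum q n / q ^ n) • trAllButFirst (antis Rh q n)

/-- The Reflection equation `R̂ L₁ R̂ L₁ = L₁ R̂ L₁ R̂` on `V ⊗ V`. -/
def RErel {F : Type*} [Field F] {N : ℕ} (𝒜 : Type*) [Ring 𝒜] [Algebra F 𝒜]
    (Rh : RMat F N) (L : Matrix (Fin N) (Fin N) 𝒜) : Prop :=
  lift 𝒜 (place2 0 Rh : TensM F N 2) * place1 0 L * lift 𝒜 (place2 0 Rh) * place1 0 L =
    place1 0 L * lift 𝒜 (place2 0 Rh) * place1 0 L * lift 𝒜 (place2 0 Rh)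

/-- `L_{k̄}` (0-based: `Lbar … 0 = L₁`, `Lbar … k = R̂_k (Lbar … (k-1)) R̂_k⁻¹`). -/
noncomputable def Lbar {F : Type*} [Field F] (𝒜 : Type*) [Ring 𝒜] [Algebra F 𝒜]
    {N : ℕ} (Rh : RMat F N) (m : ℕ) (L : Matrix (Fin N) (Fin N) 𝒜) :
    ℕ → TensM 𝒜 N m
  | 0 => place1 0 L
  | k + 1 => lift 𝒜 (place2 k Rh) * Lbar 𝒜 Rh m L k * lift 𝒜 (place2 k Rh⁻¹)

/-- The product `L_{1̄} L_{2̄} ⋯ L_{k̄}` on `V^{⊗ m}`. -/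
noncomputable def LbarProd {F : Type*} [Field F] (𝒜 : Type*) [Ring 𝒜] [Algebra F 𝒜]
    {N : ℕ} (Rh : RMat F N) (m : ℕ) (L : Matrix (Fin N) (Fin N) 𝒜) :
    ℕ → TensM 𝒜 N m
  | 0 => 1
  | k + 1 => LbarProd 𝒜 Rh m L k * Lbar 𝒜 Rh m L k

/-- Insertion of a copy of `D` on every tensor leg of `V^{⊗(m+1)}` except the first one. -/
def Dbig {F : Type*} [Field F] {N : ℕ} (D : Matrix (Fin N) (Fin N) F) (m : ℕ) :
    TensM F N (m + 1) :=
  Matrix.of fun a b =>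
    (if a 0 = b 0 then (1 : F) else 0) * ∏ t : Fin m, D (a t.succ) (b t.succ)

/-- `L^{∧k} = Tr_{q (2…k)} (A^{(k)} L_{1̄} ⋯ L_{k̄})`, the `q`-trace over the legs `2…k`,
with a copy of `D` inserted in each traced leg. -/
noncomputable def LwedgeRE {F : Type*} [Field F] (𝒜 : Type*) [Ring 𝒜] [Algebra F 𝒜]
    {N : ℕ} (Rh : RMat F N) (q : F) (D : Matrix (Fin N) (Fin N) F)
    (L : Matrix (Fin N) (Fin N) 𝒜) : ℕ → Matrix (Fin N) (Fin N) 𝒜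
  | 0 => 1
  | k + 1 => trAllButFirst
      (lift 𝒜 (antis Rh q (k + 1)) * LbarProd 𝒜 Rh (k + 1) L (k + 1) * lift 𝒜 (Dbig D k))

/-- `L^{Sk} = Tr_{q (2…k)} (S^{(k)} L_{1̄} ⋯ L_{k̄})`. -/
noncomputable def LsymRE {F : Type*} [Field F] (𝒜 : Type*) [Ring 𝒜] [Algebra F 𝒜]
    {N : ℕ} (Rh : RMat F N) (q : F) (D : Matrix (Fin N) (Fin N) F)
    (L : Matrix (Fin N) (Fin N) 𝒜) : ℕ → Matrix (Fin N) (Fin N) 𝒜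
  | 0 => 1
  | k + 1 => trAllButFirst
      (lift 𝒜 (syms Rh q (k + 1)) * LbarProd 𝒜 Rh (k + 1) L (k + 1) * lift 𝒜 (Dbig D k))

/-- `σ_k(L) = q^k Tr_q (L^{∧k})`, with `σ₀(L) = 1`;  `Tr_q X = Tr (D_r X)`. -/
noncomputable def sigmaRE {F : Type*} [Field F] (𝒜 : Type*) [Ring 𝒜] [Algebra F 𝒜]
    {N : ℕ} (Rh : RMat F N) (q : F) (D : Matrix (Fin N) (Fin N) F)
    (L : Matrix (Fin N) (Fin N) 𝒜) : ℕ → 𝒜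
  | 0 => 1
  | k + 1 => q ^ (k + 1) •
      Matrix.trace (D.map (algebraMap F 𝒜) * LwedgeRE 𝒜 Rh q D L (k + 1))

/-- `τ_k(L) = q^{-k} Tr_q (L^{Sk})`, with `τ₀(L) = 1`. -/
noncomputable def tauRE {F : Type*} [Field F] (𝒜 : Type*) [Ring 𝒜] [Algebra F 𝒜]
    {N : ℕ} (Rh : RMat F N) (q : F) (D : Matrix (Fin N) (Fin N) F)
    (L : Matrix (Fin N) (Fin N) 𝒜) : ℕ → 𝒜
  | 0 => 1
  | k + 1 => q⁻¹ ^ (k + 1) •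
      Matrix.trace (D.map (algebraMap F 𝒜) * LsymRE 𝒜 Rh q D L (k + 1))

/-!
Unfolding the definition, `(k+1)_q S^{(k+1)} = q^{-k} (S^{(k)})² + k_q S^{(k)} R̂_k S^{(k)}`, so the
identity says that `S^{(k)}` is idempotent. This holds for any elements `R̂_i` of an algebra
satisfying the Hecke and braid relations, and is proved by induction on `k` together with
`R̂_i S^{(k)} = q S^{(k)}` for `i < k` and `k_q S^{(k)} = J_{k-1} S^{(k-1)}`, where `J_{k-1}` is the
`q`-weighted sum over coset representatives. The second lets `R̂_k` pass through `J_k` by the braid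
relation and be absorbed into `S^{(k)}`, giving `R̂_k S^{(k+1)} = q S^{(k+1)}`; then
`S^{(k)} (q^{-k} + k_q R̂_k) S^{(k+1)} = (q^{-k} + q k_q) S^{(k+1)} = (k+1)_q S^{(k+1)}` makes
`S^{(k+1)}` idempotent. The operators `R̂_i` on `V^{⊗ m}` form such a family because placing a
matrix on some tensor legs is multiplicative and placements on disjoint legs commute.
-/

lemma qnum_one {F : Type*} [Field F] {q : F} (hq : q - q⁻¹ ≠ 0) : qnum q 1 = 1 := by
  rw [qnum, pow_one, pow_one, div_self hq]

lemma qnum_succ {F : Type*} [Field F] {q : F} (hq : q - q⁻¹ ≠ 0) (k : ℕ) :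
    qnum q (k + 1) = q⁻¹ ^ k + q * qnum q k := by
  rw [qnum, qnum, div_eq_iff hq, add_mul, mul_assoc, div_mul_cancel₀ _ hq]
  ring

/-- The relations of the Hecke algebra of type `A_{n-1}`, imposed on `r 0, …, r (n - 2)` only:
on `V^{⊗ n}` these are `R̂₁, …, R̂_{n-1}`, and `place2 i` is zero for larger `i`. -/
structure IsHeckeFamily {F A : Type*} [Field F] [Ring A] [Algebra F A]
    (q : F) (r : ℕ → A) (n : ℕ) : Prop where
  mul_self : ∀ i, i + 2 ≤ n → r i * r i = 1 + (q - q⁻¹) • r i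
  braid : ∀ i, i + 3 ≤ n → r i * r (i + 1) * r i = r (i + 1) * r i * r (i + 1)
  commute : ∀ i j, i + 2 ≤ j → j + 2 ≤ n → Commute (r i) (r j)

section Hecke

variable {F A : Type*} [Field F] [Ring A] [Algebra F A] (q : F) (r : ℕ → A)

noncomputable def qSymmetrizer : ℕ → A
  | 0 => 1
  | 1 => 1
  | k + 2 =>
      (qnum q (k + 2))⁻¹ •
        (qSymmetrizer (k + 1) * (q⁻¹ ^ (k + 1) • 1 + qnum q (k + 1) • r k) *
          qSymmetrizer (k + 1))

/-- `cosetSum q r k = ∑_{j ≤ k} q^{-j} r_j r_{j+1} ⋯ r_{k-1}`, a sum over the minimal coset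
representatives of `S_k` in `S_{k+1}`; it satisfies
`(k+1)_q S^{(k+1)} = cosetSum q r k * S^{(k)}`. -/
noncomputable def cosetSum : ℕ → A
  | 0 => 1
  | k + 1 => q⁻¹ ^ (k + 1) • 1 + cosetSum k * r k

variable {q r} {n : ℕ}

lemma qnum_smul_qSymmetrizer_succ_succ {k : ℕ} (hk : qnum q (k + 2) ≠ 0) :
    qnum q (k + 2) • qSymmetrizer q r (k + 2) =
      qSymmetrizer q r (k + 1) * (q⁻¹ ^ (k + 1) • 1 + qnum q (k + 1) • r k) *
        qSymmetrizer q r (k + 1) := by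
  rw [qSymmetrizer, smul_inv_smul₀ hk]

lemma qnum_smul_qSymmetrizer_succ_succ_of_mul_self {k : ℕ} (hk : qnum q (k + 2) ≠ 0)
    (hS : qSymmetrizer q r (k + 1) * qSymmetrizer q r (k + 1) = qSymmetrizer q r (k + 1)) :
    qnum q (k + 2) • qSymmetrizer q r (k + 2) =
      q⁻¹ ^ (k + 1) • qSymmetrizer q r (k + 1) +
        qnum q (k + 1) • (qSymmetrizer q r (k + 1) * r k * qSymmetrizer q r (k + 1)) := by
  rw [qnum_smul_qSymmetrizer_succ_succ hk]
  simp only [mul_add, add_mul, mul_smul_comm, smul_mul_assoc, mul_one, hS]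

lemma qSymmetrizer_mul_qSymmetrizer_succ {k : ℕ}
    (hS : qSymmetrizer q r k * qSymmetrizer q r k = qSymmetrizer q r k) :
    qSymmetrizer q r k * qSymmetrizer q r (k + 1) = qSymmetrizer q r (k + 1) := by
  cases k with
  | zero => simp [qSymmetrizer]
  | succ k => rw [qSymmetrizer, mul_smul_comm, ← mul_assoc, ← mul_assoc, hS]

namespace IsHeckeFamily

variable (h : IsHeckeFamily q r n)
include h

lemma commute_qSymmetrizer : ∀ {k j : ℕ}, k ≤ j → j + 2 ≤ n →
    Commute (r j) (qSymmetrizer q r k)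
  | 0, _, _, _ => Commute.one_right _
  | 1, _, _, _ => Commute.one_right _
  | k + 2, j, hkj, hjn => by
    have hS := commute_qSymmetrizer (k := k + 1) (by omega) hjn
    have hr := (h.commute k j (by omega) hjn).symm
    rw [qSymmetrizer]
    exact ((hS.mul_right (((Commute.one_right _).smul_right _).add_right
      (hr.smul_right _))).mul_right hS).smul_right _

lemma commute_cosetSum : ∀ {k j : ℕ}, k + 1 ≤ j → j + 2 ≤ n → Commute (r j) (cosetSum q r k)
  | 0, _, _, _ => Commute.one_right _
  | k + 1, j, hkj, hjn =>
    ((Commute.one_right _).smul_right _).add_right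
      ((commute_cosetSum (by omega) hjn).mul_right (h.commute k j (by omega) hjn).symm)

lemma qnum_smul_qSymmetrizer_succ_succ_eq_cosetSum_mul {k : ℕ} (hk : k + 2 ≤ n)
    (hqk : qnum q (k + 2) ≠ 0)
    (hC : qnum q (k + 1) • qSymmetrizer q r (k + 1) = cosetSum q r k * qSymmetrizer q r k)
    (hS₀ : qSymmetrizer q r k * qSymmetrizer q r k = qSymmetrizer q r k)
    (hS₁ : qSymmetrizer q r (k + 1) * qSymmetrizer q r (k + 1) = qSymmetrizer q r (k + 1)) :
    qnum q (k + 2) • qSymmetrizer q r (k + 2) =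
      cosetSum q r (k + 1) * qSymmetrizer q r (k + 1) := by
  have hRS : r k * qSymmetrizer q r k = qSymmetrizer q r k * r k :=
    (h.commute_qSymmetrizer le_rfl hk).eq
  rw [qnum_smul_qSymmetrizer_succ_succ_of_mul_self hqk hS₁, ← smul_mul_assoc, ← smul_mul_assoc,
    hC, mul_assoc (cosetSum q r k), ← hRS, mul_assoc, mul_assoc,
    qSymmetrizer_mul_qSymmetrizer_succ hS₀, cosetSum, add_mul, smul_mul_assoc, one_mul,
    mul_assoc]

/-- `r k` commutes past the part of `cosetSum q r (k + 1)` built from `r 0, …, r (k - 2)`,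
and the braid relation turns `r k r (k - 1) r k` into `r (k - 1) r k r (k - 1)`, whose last factor
is absorbed by `s`. -/
lemma mul_cosetSum_mul_eq_smul {k : ℕ} (hq : q ≠ 0) (hk : k + 2 ≤ n) {s : A}
    (hs : ∀ i, i < k → r i * s = q • s) :
    r k * (cosetSum q r (k + 1) * s) = q • (cosetSum q r (k + 1) * s) := by
  have hqq : q * q⁻¹ = 1 := mul_inv_cancel₀ hq
  cases k with
  | zero =>
    simp only [cosetSum, zero_add, pow_one, one_mul, add_mul, mul_add, smul_mul_assoc,
      mul_smul_comm, ← mul_assoc, h.mul_self 0 hk, one_mul]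
    linear_combination (norm := module) -(hqq • s)
  | succ k =>
    have hJ : r (k + 1) * cosetSum q r k = cosetSum q r k * r (k + 1) :=
      (h.commute_cosetSum le_rfl hk).eq
    have hsq : r (k + 1) * (r (k + 1) * s) = s + (q - q⁻¹) • (r (k + 1) * s) := by
      rw [← mul_assoc, h.mul_self (k + 1) hk, add_mul, one_mul, smul_mul_assoc]
    have hbraid : r (k + 1) * (r k * (r (k + 1) * s)) = q • (r k * (r (k + 1) * s)) := by
      simp only [← mul_assoc]
      rw [← h.braid k hk, mul_assoc _ (r k), hs k (by omega), mul_smul_comm]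
    have hfar : r (k + 1) * (cosetSum q r k * (r k * (r (k + 1) * s))) =
        q • (cosetSum q r k * (r k * (r (k + 1) * s))) := by
      rw [← mul_assoc, hJ, mul_assoc, hbraid, mul_smul_comm]
    simp only [cosetSum, add_mul, mul_add, smul_mul_assoc, mul_smul_comm, one_mul, mul_assoc,
      hsq, hfar]
    linear_combination (norm := module) -(q⁻¹ ^ (k + 1) • hqq • s)

lemma mul_qSymmetrizer_succ_succ_eq_smul {k : ℕ} (hq : q ≠ 0) (hk : k + 2 ≤ n)
    (hqk : qnum q (k + 2) ≠ 0)
    (hB : ∀ i, i + 2 ≤ k + 1 → r i * qSymmetrizer q r (k + 1) = q • qSymmetrizer q r (k + 1))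
    (hC : qnum q (k + 2) • qSymmetrizer q r (k + 2) =
      cosetSum q r (k + 1) * qSymmetrizer q r (k + 1)) :
    ∀ i, i + 2 ≤ k + 2 → r i * qSymmetrizer q r (k + 2) = q • qSymmetrizer q r (k + 2) := by
  intro i hi
  rcases Nat.lt_or_ge i k with hik | hik
  · rw [qSymmetrizer, mul_smul_comm, ← mul_assoc, ← mul_assoc, hB i (by omega), smul_mul_assoc,
      smul_mul_assoc, smul_comm]
  · obtain rfl : i = k := by omega
    refine smul_right_injective A hqk ?_
    dsimp only
    rw [← mul_smul_comm, hC, h.mul_cosetSum_mul_eq_smul hq hk fun j hj => hB j (by omega), ← hC,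
      smul_comm]

end IsHeckeFamily

lemma qSymmetrizer_succ_succ_mul_self {k : ℕ} (hq : q - q⁻¹ ≠ 0) (hqk : qnum q (k + 2) ≠ 0)
    (hS : qSymmetrizer q r (k + 1) * qSymmetrizer q r (k + 1) = qSymmetrizer q r (k + 1))
    (htop : r k * qSymmetrizer q r (k + 2) = q • qSymmetrizer q r (k + 2)) :
    qSymmetrizer q r (k + 2) * qSymmetrizer q r (k + 2) = qSymmetrizer q r (k + 2) := by
  have hX : (q⁻¹ ^ (k + 1) • 1 + qnum q (k + 1) • r k) * qSymmetrizer q r (k + 2) =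
      qnum q (k + 2) • qSymmetrizer q r (k + 2) := by
    rw [add_mul, smul_mul_assoc, one_mul, smul_mul_assoc, htop, smul_smul, ← add_smul,
      qnum_succ hq (k + 1), mul_comm q]
  nth_rewrite 1 [qSymmetrizer]
  rw [smul_mul_assoc, mul_assoc, mul_assoc, qSymmetrizer_mul_qSymmetrizer_succ hS, hX,
    mul_smul_comm, qSymmetrizer_mul_qSymmetrizer_succ hS, inv_smul_smul₀ hqk]

namespace IsHeckeFamily

variable (h : IsHeckeFamily q r n) (hqnum : ∀ k, 1 ≤ k → qnum q k ≠ 0)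
include h hqnum

lemma qSymmetrizer_invariant : ∀ k, k + 1 ≤ n →
    qSymmetrizer q r k * qSymmetrizer q r k = qSymmetrizer q r k ∧
    qSymmetrizer q r (k + 1) * qSymmetrizer q r (k + 1) = qSymmetrizer q r (k + 1) ∧
    (∀ i, i + 2 ≤ k + 1 → r i * qSymmetrizer q r (k + 1) = q • qSymmetrizer q r (k + 1)) ∧
    qnum q (k + 1) • qSymmetrizer q r (k + 1) = cosetSum q r k * qSymmetrizer q r k := by
  have hδ : q - q⁻¹ ≠ 0 := fun h0 => hqnum 1 le_rfl (by rw [qnum, h0, div_zero])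
  have hq : q ≠ 0 := by rintro rfl; simp at hδ
  intro k hk
  induction k with
  | zero =>
    refine ⟨mul_one _, mul_one _, fun i hi => by omega, ?_⟩
    simp [qSymmetrizer, cosetSum, qnum_one hδ]
  | succ k ih =>
    obtain ⟨hS₀, hS₁, hB, hC⟩ := ih (by omega)
    have hqk := hqnum (k + 2) (by omega)
    have hC' := h.qnum_smul_qSymmetrizer_succ_succ_eq_cosetSum_mul (by omega) hqk hC hS₀ hS₁
    have hB' := h.mul_qSymmetrizer_succ_succ_eq_smul hq (by omega) hqk hB hC'
    exact ⟨hS₁, qSymmetrizer_succ_succ_mul_self hδ hqk hS₁ (hB' k le_rfl), hB', hC'⟩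

theorem qSymmetrizer_mul_self {k : ℕ} (hk : k ≤ n) :
    qSymmetrizer q r k * qSymmetrizer q r k = qSymmetrizer q r k := by
  cases k with
  | zero => exact mul_one _
  | succ k => exact (h.qSymmetrizer_invariant hqnum k hk).2.1

theorem qSymmetrizer_recursion {k : ℕ} (hk : 1 ≤ k) (hkn : k + 1 ≤ n) :
    q⁻¹ ^ k • qSymmetrizer q r k =
      qnum q (k + 1) • qSymmetrizer q r (k + 1) -
        qnum q k • (qSymmetrizer q r k * r (k - 1) * qSymmetrizer q r k) := by
  obtain ⟨j, rfl⟩ : ∃ j, k = j + 1 := ⟨k - 1, by omega⟩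
  rw [qnum_smul_qSymmetrizer_succ_succ_of_mul_self (hqnum _ (by omega))
    (h.qSymmetrizer_mul_self hqnum (by omega)), Nat.add_sub_cancel, add_sub_cancel_right]

end IsHeckeFamily
end Hecke

section Place

variable {R : Type*} [CommSemiring R] {N : ℕ}

def place {r m : ℕ} (e : Fin r ↪ Fin m) (M : TensM R N r) : TensM R N m :=
  Matrix.of fun a b => if ∀ t ∉ Set.range e, a t = b t then M (a ∘ e) (b ∘ e) else 0

def window (i : ℕ) {r m : ℕ} (h : i + r ≤ m) : Fin r ↪ Fin m :=
  ⟨fun s => ⟨i + s, by omega⟩, fun s t hst => by simpa [Fin.ext_iff] using hst⟩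

variable {r m : ℕ} (e : Fin r ↪ Fin m)

lemma place_add (A B : TensM R N r) : place e (A + B) = place e A + place e B := by
  ext a b
  simp only [place, Matrix.of_apply, Matrix.add_apply]
  split_ifs <;> simp

lemma place_smul (c : R) (A : TensM R N r) : place e (c • A) = c • place e A := by
  ext a b
  simp only [place, Matrix.of_apply, Matrix.smul_apply]
  split_ifs <;> simp

lemma place_one : place e (1 : TensM R N r) = 1 := by
  ext a b
  have : a = b ↔ (∀ t ∉ Set.range e, a t = b t) ∧ a ∘ e = b ∘ e := by
    refine ⟨fun hab => by simp [hab], fun ⟨hoff, hon⟩ => funext fun t => ?_⟩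
    by_cases ht : t ∈ Set.range e
    · obtain ⟨s, rfl⟩ := ht
      exact congrFun hon s
    · exact hoff t ht
  simp only [place, Matrix.of_apply, Matrix.one_apply, this]
  split_ifs <;> tauto

lemma place_mul (A B : TensM R N r) : place e (A * B) = place e A * place e B := by
  ext a b
  simp only [place, Matrix.of_apply, Matrix.mul_apply]
  split_ifs with hab
  -- the intermediate indices agreeing with `a` off `range e` are the `Function.extend e g a`
  · refine Fintype.sum_of_injective (fun g => Function.extend e g a)
      (fun g g' hgg' => ?_) _ _ (fun c hc => ?_) (fun g => ?_)
    · simpa [Function.extend_comp e.injective] using congrArg (· ∘ e) hgg'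
    · split_ifs with hac
      · refine absurd ⟨c ∘ e, funext fun t => ?_⟩ hc
        by_cases ht : ∃ s, e s = t
        · obtain ⟨s, rfl⟩ := ht
          exact e.injective.extend_apply _ _ s
        · exact (Function.extend_apply' _ _ t ht).trans (hac t ht)
      all_goals simp
    · have hoff : ∀ t ∉ Set.range e, Function.extend e g a t = a t :=
        fun t ht => Function.extend_apply' _ _ t ht
      rw [if_pos fun t ht => (hoff t ht).symm, if_pos fun t ht => (hoff t ht).trans (hab t ht),
        Function.extend_comp e.injective]
  · refine (Finset.sum_eq_zero fun c _ => ?_).symm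
    split_ifs with hac hcb
    · exact absurd (fun t ht => (hac t ht).trans (hcb t ht)) hab
    all_goals simp

lemma place_place {k : ℕ} (f : Fin k ↪ Fin r) (M : TensM R N k) :
    place e (place f M) = place (f.trans e) M := by
  ext a b
  have hiff : (∀ t ∉ Set.range (f.trans e), a t = b t) ↔
      (∀ t ∉ Set.range e, a t = b t) ∧ ∀ s ∉ Set.range f, a (e s) = b (e s) := by
    refine ⟨fun H => ⟨fun t ht => H t fun ⟨u, hu⟩ => ht ⟨f u, hu⟩,
      fun s hs => H (e s) fun ⟨u, hu⟩ => hs ⟨u, e.injective hu⟩⟩, fun ⟨H₁, H₂⟩ t ht => ?_⟩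
    by_cases hte : t ∈ Set.range e
    · obtain ⟨s, rfl⟩ := hte
      exact H₂ s fun ⟨u, hu⟩ => ht ⟨u, by simp [hu]⟩
    · exact H₁ t hte
  simp only [place, Matrix.of_apply, hiff, Function.comp_apply]
  split_ifs <;> first | rfl | tauto

lemma place_mul_place_apply {k : ℕ} {f : Fin k ↪ Fin m}
    (hef : Disjoint (Set.range e) (Set.range f)) (A : TensM R N r) (B : TensM R N k)
    (a b : Fin m → Fin N) :
    (place e A * place f B) a b =
      if ∀ t ∉ Set.range e, t ∉ Set.range f → a t = b t then
        A (a ∘ e) (b ∘ e) * B (a ∘ f) (b ∘ f)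
      else 0 := by
  have hf : ∀ s, f s ∉ Set.range e := fun s hs => Set.disjoint_right.mp hef ⟨s, rfl⟩ hs
  set c₀ := Function.extend e (b ∘ e) a
  have hc₀e : c₀ ∘ e = b ∘ e := Function.extend_comp e.injective _ _
  have hc₀ : ∀ t ∉ Set.range e, c₀ t = a t := fun t ht => Function.extend_apply' _ _ t ht
  have hc₀f : c₀ ∘ f = a ∘ f := funext fun s => hc₀ _ (hf s)
  have hc₀b : (∀ t ∉ Set.range f, c₀ t = b t) ↔
      ∀ t ∉ Set.range e, t ∉ Set.range f → a t = b t := by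
    refine ⟨fun H t hte htf => (hc₀ t hte).symm.trans (H t htf), fun H t htf => ?_⟩
    by_cases hte : t ∈ Set.range e
    · obtain ⟨s, rfl⟩ := hte
      exact congrFun hc₀e s
    · exact (hc₀ t hte).trans (H t hte htf)
  rw [Matrix.mul_apply, Fintype.sum_eq_single c₀]
  · simp only [place, Matrix.of_apply, hc₀b, hc₀e, hc₀f, if_pos fun t ht => (hc₀ t ht).symm]
    split_ifs <;> simp
  · intro c hc
    simp only [place, Matrix.of_apply]
    split_ifs with hac hcb <;> try simp
    refine absurd (funext fun t => ?_) hc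
    by_cases hte : t ∈ Set.range e
    · obtain ⟨s, rfl⟩ := hte
      exact (hcb _ fun hs => Set.disjoint_left.mp hef ⟨s, rfl⟩ hs).trans (congrFun hc₀e s).symm
    · exact (hac t hte).symm.trans (hc₀ t hte).symm

lemma place_commute {k : ℕ} {f : Fin k ↪ Fin m} (hef : Disjoint (Set.range e) (Set.range f))
    (A : TensM R N r) (B : TensM R N k) : Commute (place e A) (place f B) := by
  ext a b
  rw [place_mul_place_apply e hef, place_mul_place_apply f hef.symm, mul_comm]
  simp only [imp.swap (a := _ ∉ Set.range e)]

@[simp]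
lemma val_window_apply {i : ℕ} (h : i + r ≤ m) (s : Fin r) : (window i h s).val = i + s.val :=
  rfl

lemma mem_range_window {i : ℕ} (h : i + r ≤ m) (t : Fin m) :
    t ∈ Set.range (window i h) ↔ i ≤ t.val ∧ t.val < i + r := by
  refine ⟨fun ⟨s, hs⟩ => ?_, fun ht => ⟨⟨t - i, by omega⟩, Fin.ext (by simp; omega)⟩⟩
  subst hs
  simp

lemma window_trans {i j k : ℕ} (hj : j + k ≤ r) (hi : i + r ≤ m) :
    (window j hj).trans (window i hi) = window (i + j) (by omega) := by
  ext s
  simp [Nat.add_assoc]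

lemma place_window_place_window {i j k : ℕ} (hj : j + k ≤ r) (hi : i + r ≤ m)
    (M : TensM R N k) :
    place (window i hi) (place (window j hj) M) = place (window (i + j) (by omega)) M := by
  rw [place_place, window_trans]

def toTens2 : RMat R N ≃ₐ[R] TensM R N 2 :=
  Matrix.reindexAlgEquiv R R (piFinTwoEquiv fun _ => Fin N).symm

lemma place2_eq_place {i : ℕ} (h : i + 2 ≤ m) (M : RMat R N) :
    (place2 i M : TensM R N m) = place (window i h) (toTens2 M) := by
  ext a b
  have hiff : (∀ t : Fin m, t.val ≠ i → t.val ≠ i + 1 → a t = b t) ↔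
      ∀ t ∉ Set.range (window i h), a t = b t := by
    simp only [mem_range_window]
    exact forall_congr' fun t => ⟨fun H ht => H (by omega) (by omega), fun H h₁ h₂ => H (by omega)⟩
  simp only [place2, place, dif_pos (show i + 1 < m by omega), hiff, toTens2,
    Matrix.coe_reindexAlgEquiv, Matrix.reindex_apply, Matrix.submatrix_apply, Matrix.of_apply]
  rfl

lemma embed_eq_place {k : ℕ} (h : k ≤ m) (M : TensM R N k) :
    embed m M = place (window 0 (by omega)) M := by
  ext a b
  have hiff : (∀ t : Fin m, k ≤ t.val → a t = b t) ↔
      ∀ t ∉ Set.range (window 0 (by omega : 0 + k ≤ m)), a t = b t := by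
    simp only [mem_range_window]
    exact forall_congr' fun t => ⟨fun H ht => H (by omega), fun H ht => H (by omega)⟩
  simp only [embed, place, dif_pos h, hiff, Matrix.of_apply]
  congr! 3 <;> exact congrArg _ (Fin.ext (zero_add _).symm)

lemma embed_self {k : ℕ} (M : TensM R N k) : embed k M = M := by
  ext a b
  simp [embed]

lemma place_window_place2 {i j k m : ℕ} (hj : j + 2 ≤ k) (hi : i + k ≤ m) (M : RMat R N) :
    place (window i hi) (place2 j M : TensM R N k) = place2 (i + j) M := by
  rw [place2_eq_place hj, place_window_place_window, place2_eq_place]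

lemma embed_embed {k l m : ℕ} (hkl : k ≤ l) (hlm : l ≤ m) (M : TensM R N k) :
    embed m (embed l M) = embed m M := by
  rw [embed_eq_place hkl, embed_eq_place hlm, place_window_place_window,
    ← embed_eq_place (hkl.trans hlm)]

lemma embed_place2 {i k m : ℕ} (hi : i + 2 ≤ k) (hkm : k ≤ m) (M : RMat R N) :
    embed m (place2 i M : TensM R N k) = place2 i M := by
  rw [embed_eq_place hkm, place_window_place2 hi, zero_add]

end Place

lemma isHeckeFamily_place2 {F : Type*} [Field F] {N m : ℕ} {q : F} {Rh : RMat F N}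
    (hYB : YangBaxter Rh) (hH : Hecke q Rh) :
    IsHeckeFamily q (fun i => (place2 i Rh : TensM F N m)) m where
  mul_self i hi := by
    rw [place2_eq_place hi, ← place_mul, ← map_mul, show Rh * Rh = 1 + (q - q⁻¹) • Rh from hH,
      map_add, map_one, map_smul, place_add, place_one, place_smul]
  braid i hi := by
    have := congrArg (place (window i hi)) hYB
    rwa [place_mul, place_mul, place_mul, place_mul, place_window_place2 (by omega : 0 + 2 ≤ 3),
      place_window_place2 (by omega : 1 + 2 ≤ 3), add_zero] at this
  commute i j hij hj := by
    rw [place2_eq_place (by omega), place2_eq_place hj]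
    refine place_commute _ (Set.disjoint_left.mpr fun t hti htj => ?_) _ _
    rw [mem_range_window] at hti htj
    omega

lemma embed_syms {F : Type*} [Field F] {N : ℕ} (Rh : RMat F N) (q : F) :
    ∀ {k m : ℕ}, k ≤ m → embed m (syms Rh q k) = qSymmetrizer q (fun i => place2 i Rh) k
  | 0, m, h => by rw [syms, embed_eq_place h, place_one, qSymmetrizer]
  | 1, m, h => by rw [syms, embed_eq_place h, place_one, qSymmetrizer]
  | k + 2, m, h => by
    rw [syms, qSymmetrizer, embed_eq_place h]
    simp only [place_smul, place_mul, place_add, place_one]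
    rw [← embed_eq_place h, ← embed_eq_place h, embed_embed (by omega) h, embed_place2 le_rfl h,
      embed_syms Rh q (by omega)]

theorem symmetrizer_recursion_general {F : Type*} [Field F] {N : ℕ} (q : F)
    (hqnum : ∀ k : ℕ, 1 ≤ k → qnum q k ≠ 0)
    (Rh : RMat F N)
    (hYB : YangBaxter Rh) (hHecke : Hecke q Rh)
    (k : ℕ) (hk1 : 1 ≤ k) :
    q⁻¹ ^ k • embed (k + 1) (syms Rh q k) =
      qnum q (k + 1) • syms Rh q (k + 1) -
        qnum q k •
          (embed (k + 1) (syms Rh q k) * place2 (k - 1) Rh *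
            embed (k + 1) (syms Rh q k)) := by
  rw [← embed_self (syms Rh q (k + 1)), embed_syms Rh q le_rfl, embed_syms Rh q k.le_succ]
  exact (isHeckeFamily_place2 hYB hHecke).qSymmetrizer_recursion hqnum hk1 le_rfl

theorem symmetrizer_recursion {F : Type*} [Field F] {N : ℕ} (hN : 1 ≤ N) (q : F) (hq : q ≠ 0)
    (hqnum : ∀ k : ℕ, 1 ≤ k → qnum q k ≠ 0)
    (Rh : RMat F N) (hRinv : IsUnit Rh.det)
    (hYB : YangBaxter Rh) (hHecke : Hecke q Rh)
    (k : ℕ) (hk1 : 1 ≤ k) :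
    q⁻¹ ^ k • embed (k + 1) (syms Rh q k) =
      qnum q (k + 1) • syms Rh q (k + 1) -
        qnum q k •
          (embed (k + 1) (syms Rh q k) * place2 (k - 1) Rh *
            embed (k + 1) (syms Rh q k)) :=
  symmetrizer_recursion_general q hqnum Rh hYB hHecke k hk1
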